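/- arXiv:2302.03135 — 5 statements merged into one kernel-verified Lean document; each statement's English description precedes it below -/
import Mathlib

section
/- Let F̲, F̄ : ℝ → ℝ be nondecreasing with F̲ ≤ F̄, and let H ∈ I(F̲,F̄) be nondecreasing and right-continuous. Suppose there exists a countable collection of intervals {[x̲ₙ, x̄ₙ)}ₙ such that (1) H(x) ∈ {F̲(x), F̄(x)} for every x not in the union of these intervals, and (2) on each [x̲ₙ, x̄ₙ), H is constant and either H(x̄ₙ⁻) = F̲(x̄ₙ⁻) or H(x̲ₙ) = F̄(x̲ₙ). Then H is an extreme point of I(F̲,F̄): H cannot be written as λH₁ + (1−λ)H₂ with H₁ ≠ H₂ both in I(F̲,F̄) and λ ∈ (0,1). -/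
open Set Filter Function MeasureTheory

/-- A nondecreasing, right-continuous function on ℝ. -/
def MonoRC (H : ℝ → ℝ) : Prop :=
  Monotone H ∧ ∀ x : ℝ, ContinuousWithinAt H (Set.Ici x) x

/-- The monotone function interval `I(F̲, F̄)`. -/
def MFI (Fl Fu : ℝ → ℝ) : Set (ℝ → ℝ) :=
  {H | MonoRC H ∧ ∀ x, Fl x ≤ H x ∧ H x ≤ Fu x}

/-- Extreme point of a convex set of functions: no representation as a nontrivial
convex combination of two distinct elements. -/
def IsExtremePt (S : Set (ℝ → ℝ)) (H : ℝ → ℝ) : Prop :=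
  H ∈ S ∧ ∀ H₁ ∈ S, ∀ H₂ ∈ S, ∀ l : ℝ, l ∈ Set.Ioo (0:ℝ) 1 →
    (∀ x, H x = l * H₁ x + (1 - l) * H₂ x) → H₁ = H₂

/-- A cumulative distribution function on ℝ. -/
def IsCDF (G : ℝ → ℝ) : Prop :=
  Monotone G ∧ (∀ x : ℝ, ContinuousWithinAt G (Set.Ici x) x) ∧
    Filter.Tendsto G Filter.atBot (nhds 0) ∧ Filter.Tendsto G Filter.atTop (nhds 1)

/-- The quantile function `G⁻¹(τ) = inf {x | G x ≥ τ}`. -/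
noncomputable def quantile (G : ℝ → ℝ) (τ : ℝ) : ℝ := sInf {x | τ ≤ G x}

/-- The right limit of the quantile function, `G⁻¹(τ⁺) = inf {x | G x > τ}`. -/
noncomputable def quantilePlus (G : ℝ → ℝ) (τ : ℝ) : ℝ := sInf {x | τ < G x}

/-- Left truncation of a prior: `F_L^τ(ω) = min {F(ω)/τ, 1}`. -/
noncomputable def FL (F : ℝ → ℝ) (τ : ℝ) (ω : ℝ) : ℝ := min (F ω / τ) 1

/-- Right truncation of a prior: `F_R^τ(ω) = max {(F(ω) − τ)/(1 − τ), 0}`. -/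
noncomputable def FR (F : ℝ → ℝ) (τ : ℝ) (ω : ℝ) : ℝ := max ((F ω - τ) / (1 - τ)) 0

/-!
If `H = l H₁ + (1 - l) H₂` with `H₁, H₂` between `F̲` and `F̄` and `0 < l < 1`, then at every point
where `H` touches one of the bounds, both `H₁` and `H₂` touch it too. On an interval `[a, b)`
where `H` is constant, the same squeeze applied to `H(a) = F̄(a)` (resp. to the left limits
`H(b⁻) = F̲(b⁻)`) pins `H₁(a), H₂(a)` from above (resp. `H₁(b⁻), H₂(b⁻)` from below), and
monotonicity propagates this through the interval. Hence `H₁ = H = H₂` everywhere.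
-/

section ConvexCombination

variable {l u v c : ℝ}

lemma eq_of_le_of_convex_combination_eq (hl : l ∈ Ioo (0 : ℝ) 1) (hu : c ≤ u) (hv : c ≤ v)
    (h : c = l * u + (1 - l) * v) : u = c ∧ v = c := by
  obtain ⟨hl0, hl1⟩ := hl
  constructor <;> nlinarith

lemma eq_of_ge_of_convex_combination_eq (hl : l ∈ Ioo (0 : ℝ) 1) (hu : u ≤ c) (hv : v ≤ c)
    (h : c = l * u + (1 - l) * v) : u = c ∧ v = c := by
  obtain ⟨hl0, hl1⟩ := hl
  constructor <;> nlinarith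

end ConvexCombination

section LeftLim

lemma leftLim_eq_of_eqOn_Ico {f : ℝ → ℝ} {a b x : ℝ} (hx : x ∈ Ico a b)
    (hf : ∀ y ∈ Ico a b, f y = f x) : leftLim f b = f x := by
  refine leftLim_eq_of_tendsto (tendsto_const_nhds.congr' ?_)
  filter_upwards [Ioo_mem_nhdsLT (hx.1.trans_lt hx.2)] with y hy
  exact (hf y (Ioo_subset_Ico_self hy)).symm

lemma Monotone.leftLim_le_leftLim {f g : ℝ → ℝ} (hf : Monotone f) (hg : Monotone g)
    (hfg : ∀ y, f y ≤ g y) (x : ℝ) : leftLim f x ≤ leftLim g x :=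
  le_of_tendsto_of_tendsto' (hf.tendsto_leftLim x) (hg.tendsto_leftLim x) hfg

lemma leftLim_eq_convex_combination {H H₁ H₂ : ℝ → ℝ} {l : ℝ} (hH₁ : Monotone H₁)
    (hH₂ : Monotone H₂) (hcomb : ∀ x, H x = l * H₁ x + (1 - l) * H₂ x) (x : ℝ) :
    leftLim H x = l * leftLim H₁ x + (1 - l) * leftLim H₂ x := by
  exact leftLim_eq_of_tendsto ((((hH₁.tendsto_leftLim x).const_mul l).add
    ((hH₂.tendsto_leftLim x).const_mul (1 - l))).congr fun y => (hcomb y).symm)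

end LeftLim

namespace MFI

variable {Fl Fu H H₁ H₂ : ℝ → ℝ} {l : ℝ}
  (hH₁ : H₁ ∈ MFI Fl Fu) (hH₂ : H₂ ∈ MFI Fl Fu) (hl : l ∈ Ioo (0 : ℝ) 1)
  (hcomb : ∀ x, H x = l * H₁ x + (1 - l) * H₂ x)
include hH₁ hH₂ hl hcomb

lemma eq_of_eq_lower {x : ℝ} (hx : H x = Fl x) : H₁ x = H x ∧ H₂ x = H x :=
  eq_of_le_of_convex_combination_eq hl (hx ▸ (hH₁.2 x).1) (hx ▸ (hH₂.2 x).1) (hcomb x)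

lemma eq_of_eq_upper {x : ℝ} (hx : H x = Fu x) : H₁ x = H x ∧ H₂ x = H x :=
  eq_of_ge_of_convex_combination_eq hl (hx ▸ (hH₁.2 x).2) (hx ▸ (hH₂.2 x).2) (hcomb x)

lemma eq_of_mem_Ico_of_eq_upper {a b x : ℝ} (hx : x ∈ Ico a b)
    (hconst : ∀ y ∈ Ico a b, H y = H x) (ha : H a = Fu a) : H₁ x = H x ∧ H₂ x = H x := by
  obtain ⟨ha₁, ha₂⟩ := eq_of_eq_upper hH₁ hH₂ hl hcomb ha
  have hHa : H a = H x := hconst a ⟨le_rfl, hx.1.trans_lt hx.2⟩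
  refine eq_of_le_of_convex_combination_eq hl ?_ ?_ (hcomb x)
  · exact hHa ▸ ha₁ ▸ hH₁.1.1 hx.1
  · exact hHa ▸ ha₂ ▸ hH₂.1.1 hx.1

lemma eq_of_mem_Ico_of_leftLim_eq_lower (hFl : Monotone Fl) {a b x : ℝ} (hx : x ∈ Ico a b)
    (hconst : ∀ y ∈ Ico a b, H y = H x) (hb : leftLim H b = leftLim Fl b) :
    H₁ x = H x ∧ H₂ x = H x := by
  have hHb : leftLim H b = H x := leftLim_eq_of_eqOn_Ico hx hconst
  obtain ⟨hb₁, hb₂⟩ : leftLim H₁ b = H x ∧ leftLim H₂ b = H x := by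
    refine eq_of_le_of_convex_combination_eq hl ?_ ?_ ?_
    · exact hHb ▸ hb ▸ hFl.leftLim_le_leftLim hH₁.1.1 (fun y => (hH₁.2 y).1) b
    · exact hHb ▸ hb ▸ hFl.leftLim_le_leftLim hH₂.1.1 (fun y => (hH₂.2 y).1) b
    · rw [← hHb, leftLim_eq_convex_combination hH₁.1.1 hH₂.1.1 hcomb]
  refine eq_of_ge_of_convex_combination_eq hl ?_ ?_ (hcomb x)
  · exact hb₁ ▸ hH₁.1.1.le_leftLim hx.2
  · exact hb₂ ▸ hH₂.1.1.le_leftLim hx.2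

end MFI

theorem stmt1_general (Fl Fu H : ℝ → ℝ) (hFl : Monotone Fl)
    (hH : H ∈ MFI Fl Fu)
    (a b : ℕ → ℝ)
    (h1 : ∀ x, (∀ n, x ∉ Set.Ico (a n) (b n)) → H x = Fl x ∨ H x = Fu x)
    (h2 : ∀ n, (∀ x ∈ Set.Ico (a n) (b n), ∀ y ∈ Set.Ico (a n) (b n), H x = H y) ∧
      (Function.leftLim H (b n) = Function.leftLim Fl (b n) ∨ H (a n) = Fu (a n))) :
    IsExtremePt (MFI Fl Fu) H := by
  refine ⟨hH, fun H₁ hH₁ H₂ hH₂ l hl hcomb => funext fun x => ?_⟩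
  suffices h : H₁ x = H x ∧ H₂ x = H x from h.1.trans h.2.symm
  by_cases hx : ∀ n, x ∉ Ico (a n) (b n)
  · rcases h1 x hx with hlow | hup
    · exact MFI.eq_of_eq_lower hH₁ hH₂ hl hcomb hlow
    · exact MFI.eq_of_eq_upper hH₁ hH₂ hl hcomb hup
  · push Not at hx
    obtain ⟨n, hxn⟩ := hx
    have hconst : ∀ y ∈ Ico (a n) (b n), H y = H x := fun y hy => (h2 n).1 y hy x hxn
    rcases (h2 n).2 with hb | ha
    · exact MFI.eq_of_mem_Ico_of_leftLim_eq_lower hH₁ hH₂ hl hcomb hFl hxn hconst hb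
    · exact MFI.eq_of_mem_Ico_of_eq_upper hH₁ hH₂ hl hcomb hxn hconst ha

/-- sufficiency of conditions 1 and 2 for extremality. -/
theorem stmt1 (Fl Fu H : ℝ → ℝ) (hFl : Monotone Fl) (hFu : Monotone Fu)
    (hle : ∀ x, Fl x ≤ Fu x) (hH : H ∈ MFI Fl Fu)
    (a b : ℕ → ℝ)
    (h1 : ∀ x, (∀ n, x ∉ Set.Ico (a n) (b n)) → H x = Fl x ∨ H x = Fu x)
    (h2 : ∀ n, (∀ x ∈ Set.Ico (a n) (b n), ∀ y ∈ Set.Ico (a n) (b n), H x = H y) ∧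
      (Function.leftLim H (b n) = Function.leftLim Fl (b n) ∨ H (a n) = Fu (a n))) :
    IsExtremePt (MFI Fl Fu) H :=
  stmt1_general Fl Fu H hFl hH a b h1 h2
end

section
/- Let h : [c,d] → [α,β] be nondecreasing and right-continuous, where c < d and α < β. If h is an extreme point of the convex set of all nondecreasing right-continuous functions from [c,d] to [α,β], then h takes at most two values, namely h(x) ∈ {α, β} for all x (i.e., h is a step function with at most one jump from α to β). -/
open Set Filter Function MeasureTheory

/-! If `α < h x < β` at some point, then `h ± ½ · min (h - α, β - h)` are two members of the set
that differ at `x` and average to `h`. They lie in the set because for `|t| ≤ 1` the map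
`y ↦ y + t · min (y - α, β - y)` is continuous, maps `[α, β]` into itself, and is monotone, the
minimum being `1`-Lipschitz. -/

def boundedMonoRC (X : Type*) [Preorder X] [TopologicalSpace X] (α β : ℝ) : Set (X → ℝ) :=
  {h | Monotone h ∧ (∀ x, ContinuousWithinAt h (Ici x) x) ∧ ∀ x, α ≤ h x ∧ h x ≤ β}

noncomputable def distEndpoints (α β y : ℝ) : ℝ := min (y - α) (β - y)

lemma lipschitzWith_distEndpoints (α β : ℝ) : LipschitzWith 1 (distEndpoints α β) := by
  unfold distEndpoints
  simpa using ((LipschitzWith.id.sub (LipschitzWith.const α)).min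
    ((LipschitzWith.const β).sub LipschitzWith.id))

lemma monotone_add_mul_of_lipschitzWith_one {φ : ℝ → ℝ} (hφ : LipschitzWith 1 φ) {t : ℝ}
    (ht : |t| ≤ 1) : Monotone fun y => y + t * φ y := by
  intro a b hab
  have hφab : |φ b - φ a| ≤ b - a := by
    simpa [Real.dist_eq, abs_of_nonneg (sub_nonneg.2 hab)] using hφ.dist_le_mul b a
  have hshift : |t * (φ b - φ a)| ≤ b - a := by
    rw [abs_mul]
    nlinarith [abs_nonneg t, abs_nonneg (φ b - φ a)]
  linarith [neg_abs_le (t * (φ b - φ a)), mul_sub t (φ b) (φ a), hshift]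

lemma mapsTo_add_mul_distEndpoints {α β t : ℝ} (ht : |t| ≤ 1) :
    MapsTo (fun y => y + t * distEndpoints α β y) (Icc α β) (Icc α β) := by
  rintro y ⟨hαy, hyβ⟩
  have hlow : distEndpoints α β y ≤ y - α := min_le_left _ _
  have hupp : distEndpoints α β y ≤ β - y := min_le_right _ _
  have hnonneg : 0 ≤ distEndpoints α β y := le_min (by linarith) (by linarith)
  have hshift : |t * distEndpoints α β y| ≤ distEndpoints α β y := by
    rw [abs_mul, abs_of_nonneg hnonneg]
    exact mul_le_of_le_one_left hnonneg ht
  constructor <;> linarith [abs_le.1 hshift]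

lemma comp_mem_boundedMonoRC {X : Type*} [Preorder X] [TopologicalSpace X] {α β : ℝ}
    {h : X → ℝ} (hh : h ∈ boundedMonoRC X α β) {f : ℝ → ℝ} (hf : Monotone f)
    (hfc : Continuous f) (hmaps : MapsTo f (Icc α β) (Icc α β)) :
    f ∘ h ∈ boundedMonoRC X α β :=
  ⟨hf.comp hh.1, fun x => hfc.continuousAt.comp_continuousWithinAt (hh.2.1 x),
    fun x => hmaps (hh.2.2 x)⟩

lemma add_mul_distEndpoints_comp_mem {X : Type*} [Preorder X] [TopologicalSpace X] {α β : ℝ}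
    {h : X → ℝ} (hh : h ∈ boundedMonoRC X α β) {t : ℝ} (ht : |t| ≤ 1) :
    (fun x => h x + t * distEndpoints α β (h x)) ∈ boundedMonoRC X α β :=
  comp_mem_boundedMonoRC (f := fun y => y + t * distEndpoints α β y) hh
    (monotone_add_mul_of_lipschitzWith_one (lipschitzWith_distEndpoints α β) ht)
    (continuous_id.add (continuous_const.mul (lipschitzWith_distEndpoints α β).continuous))
    (mapsTo_add_mul_distEndpoints ht)

lemma eq_or_eq_of_distEndpoints_eq_zero {α β y : ℝ} (hy : distEndpoints α β y = 0) :
    y = α ∨ y = β := by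
  unfold distEndpoints at hy
  rcases min_choice (y - α) (β - y) with h | h
  · left; linarith
  · right; linarith

theorem stmt5_general (c d α β : ℝ)
    (S : Set (Set.Icc c d → ℝ))
    (hS : S = {h : Set.Icc c d → ℝ | Monotone h ∧
      (∀ x, ContinuousWithinAt h (Set.Ici x) x) ∧ ∀ x, α ≤ h x ∧ h x ≤ β})
    (h : Set.Icc c d → ℝ) (hmem : h ∈ S)
    (hext : ∀ h₁ ∈ S, ∀ h₂ ∈ S, ∀ l : ℝ, l ∈ Set.Ioo (0:ℝ) 1 →
      (∀ x, h x = l * h₁ x + (1 - l) * h₂ x) → h₁ = h₂) :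
    ∀ x, h x = α ∨ h x = β := by
  change S = boundedMonoRC (Icc c d) α β at hS
  subst hS
  intro x
  have hhalf : |(1 / 2 : ℝ)| ≤ 1 := by norm_num [abs_of_pos]
  have hsplit := hext _ (add_mul_distEndpoints_comp_mem hmem hhalf)
    _ (add_mul_distEndpoints_comp_mem hmem (abs_neg (1 / 2 : ℝ) ▸ hhalf)) (1 / 2)
    ⟨by norm_num, by norm_num⟩ (fun y => by ring)
  apply eq_or_eq_of_distEndpoints_eq_zero
  linarith [congrFun hsplit x]

/-- extreme points of uniformly bounded monotone right-continuous
functions on an interval are one-jump step functions taking only the values α, β. -/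
theorem stmt5 (c d α β : ℝ) (hcd : c < d) (hαβ : α < β)
    (S : Set (Set.Icc c d → ℝ))
    (hS : S = {h : Set.Icc c d → ℝ | Monotone h ∧
      (∀ x, ContinuousWithinAt h (Set.Ici x) x) ∧ ∀ x, α ≤ h x ∧ h x ≤ β})
    (h : Set.Icc c d → ℝ) (hmem : h ∈ S)
    (hext : ∀ h₁ ∈ S, ∀ h₂ ∈ S, ∀ l : ℝ, l ∈ Set.Ioo (0:ℝ) 1 →
      (∀ x, h x = l * h₁ x + (1 - l) * h₂ x) → h₁ = h₂) :
    ∀ x, h x = α ∨ h x = β :=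
  stmt5_general c d α β S hS h hmem hext
end

section
/- A nondecreasing right-continuous function H : ℝ → ℝ bounded between constants α and β (α < β) is an extreme point of the set of such functions if and only if there exists t ∈ ℝ ∪ {±∞} with H(x) = α for x < t and H(x) = β for x ≥ t. -/
/-!
If `α < H x < β` somewhere, then `H ± ½ min (H - α) (β - H)` are two distinct members of the set
with midpoint `H`: the maps `u ↦ u ± ½ min (u - α) (β - u)` are monotone, continuous and preserve
`[α, β]`. So an extreme `H` takes only the values `α` and `β`, and being monotone and
right-continuous it jumps from `α` to `β` at `t = inf {x | H x = β}`. Conversely, a function with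
values in `{α, β} = extremePoints ℝ (Icc α β)` is extreme pointwise, hence extreme.
-/

open Set Filter Function MeasureTheory

lemma isExtremePt_of_forall_mem_extremePoints {S : Set (ℝ → ℝ)} {A : Set ℝ} {H : ℝ → ℝ}
    (hS : ∀ G ∈ S, ∀ x, G x ∈ A) (hH : H ∈ S) (hHA : ∀ x, H x ∈ extremePoints ℝ A) :
    IsExtremePt S H := by
  refine ⟨hH, fun H₁ h₁ H₂ h₂ l hl hcomb => funext fun x => ?_⟩
  have hseg : H x ∈ openSegment ℝ (H₁ x) (H₂ x) :=
    ⟨l, 1 - l, hl.1, sub_pos.2 hl.2, by ring, by simp [hcomb x]⟩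
  obtain ⟨e₁, e₂⟩ := (mem_extremePoints.1 (hHA x)).2 _ (hS _ h₁ x) _ (hS _ h₂ x) hseg
  rw [e₁, e₂]

lemma comp_mem_MFI {α β : ℝ} {φ H : ℝ → ℝ} (hφm : Monotone φ) (hφc : Continuous φ)
    (hφ : MapsTo φ (Icc α β) (Icc α β)) (hH : H ∈ MFI (fun _ => α) (fun _ => β)) :
    φ ∘ H ∈ MFI (fun _ => α) (fun _ => β) :=
  ⟨⟨hφm.comp hH.1.1, fun x => hφc.continuousAt.comp_continuousWithinAt (hH.1.2 x)⟩,
    fun x => hφ (hH.2 x)⟩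

lemma monotone_add_mul_min {α β c : ℝ} (hc : |c| ≤ 1) :
    Monotone fun u => u + c * min (u - α) (β - u) := by
  intro u v huv
  have hmin : |min (v - α) (β - v) - min (u - α) (β - u)| ≤ v - u := by
    simpa [abs_sub_comm u v, abs_of_nonneg (sub_nonneg.2 huv)] using
      abs_min_sub_min_le_max (v - α) (β - v) (u - α) (β - u)
  have hmul : |c * (min (v - α) (β - v) - min (u - α) (β - u))| ≤ v - u := by
    rw [abs_mul]
    exact (mul_le_of_le_one_left (abs_nonneg _) hc).trans hmin
  have := neg_le_of_abs_le hmul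
  simp only [mul_sub] at this
  linarith

lemma add_mul_min_mem_Icc {α β c u : ℝ} (hc : |c| ≤ 1) (hu : u ∈ Icc α β) :
    u + c * min (u - α) (β - u) ∈ Icc α β := by
  have hm : 0 ≤ min (u - α) (β - u) := le_min (sub_nonneg.2 hu.1) (sub_nonneg.2 hu.2)
  have h : |c * min (u - α) (β - u)| ≤ min (u - α) (β - u) := by
    rw [abs_mul, abs_of_nonneg hm]
    exact mul_le_of_le_one_left hm hc
  constructor <;>
    linarith [abs_le.1 h, min_le_left (u - α) (β - u), min_le_right (u - α) (β - u)]

lemma IsExtremePt.eq_or_eq {α β : ℝ} {H : ℝ → ℝ}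
    (hH : IsExtremePt (MFI (fun _ => α) (fun _ => β)) H) (x : ℝ) : H x = α ∨ H x = β := by
  by_contra! hx
  set φ : ℝ → ℝ → ℝ := fun c u => u + c * min (u - α) (β - u)
  have hmem : ∀ c : ℝ, |c| ≤ 1 → φ c ∘ H ∈ MFI (fun _ => α) (fun _ => β) := fun c hc =>
    comp_mem_MFI (monotone_add_mul_min hc) (by fun_prop)
      (fun u hu => add_mul_min_mem_Icc hc hu) hH.1
  have hhalf : |(2⁻¹ : ℝ)| ≤ 1 := by norm_num [abs_of_pos]
  have hsplit := hH.2 _ (hmem 2⁻¹ hhalf) _ (hmem (-2⁻¹) (by rwa [abs_neg])) 2⁻¹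
    ⟨by norm_num, by norm_num⟩ (fun y => by simp only [φ, comp_apply]; ring)
  have hpos : 0 < min (H x - α) (β - H x) :=
    lt_min (sub_pos.2 ((hH.1.2 x).1.lt_of_ne' hx.1)) (sub_pos.2 ((hH.1.2 x).2.lt_of_ne hx.2))
  have := congrFun hsplit x
  simp only [φ, comp_apply] at this
  linarith

lemma eq_of_continuousWithinAt_Ici_of_forall_gt {X : Type*} [TopologicalSpace X] [T2Space X]
    {f : ℝ → X} {x : ℝ} {c : X} (hf : ContinuousWithinAt f (Ici x) x)
    (hc : ∀ s, x < s → f s = c) : f x = c :=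
  tendsto_nhds_unique (hf.mono Ioi_subset_Ici_self).tendsto
    (tendsto_const_nhds.congr' ((eventually_nhdsWithin_of_forall hc).mono fun _ hs => hs.symm))

lemma exists_step_of_eq_or_eq {α β : ℝ} (hαβ : α < β) {H : ℝ → ℝ} (hH : MonoRC H)
    (hval : ∀ x, H x = α ∨ H x = β) :
    ∃ t : EReal, ∀ x : ℝ, ((x : EReal) < t → H x = α) ∧ (t ≤ (x : EReal) → H x = β) := by
  refine ⟨sInf (((↑) : ℝ → EReal) '' {r | H r = β}), fun x => ⟨fun hx => ?_, fun hx => ?_⟩⟩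
  · exact (hval x).resolve_right fun hxβ => hx.not_ge (sInf_le (mem_image_of_mem _ hxβ))
  · refine eq_of_continuousWithinAt_Ici_of_forall_gt (hH.2 x) fun s hs => ?_
    obtain ⟨_, ⟨r, hr, rfl⟩, hrs⟩ :=
      sInf_lt_iff.1 (hx.trans_lt (EReal.coe_lt_coe_iff.2 hs))
    refine (hval s).resolve_left fun hsα => ?_
    have := hH.1 (EReal.coe_lt_coe_iff.1 hrs).le
    rw [hr, hsα] at this
    exact this.not_gt hαβ

/-- extreme points of monotone functions between two constants are
exactly the one-jump step functions (with possibly infinite jump location). -/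
theorem stmt6 (α β : ℝ) (hαβ : α < β) (H : ℝ → ℝ)
    (hH : H ∈ MFI (fun _ => α) (fun _ => β)) :
    IsExtremePt (MFI (fun _ => α) (fun _ => β)) H ↔
      ∃ t : EReal, ∀ x : ℝ,
        ((x : EReal) < t → H x = α) ∧ (t ≤ (x : EReal) → H x = β) := by
  refine ⟨fun hext => exists_step_of_eq_or_eq hαβ hH.1 hext.eq_or_eq, ?_⟩
  rintro ⟨t, ht⟩
  refine isExtremePt_of_forall_mem_extremePoints (A := Icc α β) (fun G hG x => hG.2 x) hH
    fun x => ?_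
  rw [Set.extremePoints_Icc hαβ.le]
  rcases lt_or_ge (x : EReal) t with h | h
  · exact Or.inl ((ht x).1 h)
  · exact Or.inr ((ht x).2 h)
end

section
/- Let F be a CDF, τ ∈ (0,1), and let μ be a signal (a probability measure on CDFs with ∫ G(ω) μ(dG) = F(ω) for all ω) and r a τ-quantile selection rule. Let H be the induced distribution of posterior τ-quantiles. Then F_R^τ(ω) ≤ H(ω) ≤ F_L^τ(ω) for all ω ∈ ℝ, where F_L^τ(ω) = min{F(ω)/τ, 1} and F_R^τ(ω) = max{(F(ω)−τ)/(1−τ), 0}. -/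
open Set Filter Function MeasureTheory

/-! For a single posterior `G`, the rule puts no mass on `(-∞, ω]` when `ω < G⁻¹(τ)`, and
otherwise `G ω ≥ τ`; so `r((-∞, ω] | G) ≤ G ω / τ`. Symmetrically it puts full mass there when
`ω ≥ G⁻¹(τ⁺)`, and otherwise `G ω ≤ τ`; so `r((-∞, ω] | G) ≥ (G ω - τ) / (1 - τ)`. Both bounds are
affine in `G ω`, so integrating over `μ` and using `∫ G ω dμ = F ω` gives the claim. -/

open scoped Topology

namespace IsCDF

variable {G : ℝ → ℝ}

lemma nonneg (hG : IsCDF G) (ω : ℝ) : 0 ≤ G ω :=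
  le_of_tendsto hG.2.2.1 (eventually_atBot.2 ⟨ω, fun _ hy => hG.1 hy⟩)

lemma le_one (hG : IsCDF G) (ω : ℝ) : G ω ≤ 1 :=
  ge_of_tendsto hG.2.2.2 (eventually_atTop.2 ⟨ω, fun _ hy => hG.1 hy⟩)

lemma bddBelow_setOf_le (hG : IsCDF G) {τ : ℝ} (hτ : 0 < τ) : BddBelow {x | τ ≤ G x} := by
  obtain ⟨b, hb⟩ := eventually_atBot.1 (hG.2.2.1.eventually (eventually_lt_nhds hτ))
  exact ⟨b, fun y hy => le_of_not_ge fun hyb => (hb y hyb).not_ge hy⟩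

lemma le_apply_of_quantile_le (hG : IsCDF G) {τ ω : ℝ} (hτ0 : 0 < τ) (hτ1 : τ < 1)
    (h : quantile G τ ≤ ω) : τ ≤ G ω := by
  have hne : {x | τ ≤ G x}.Nonempty :=
    (eventually_atTop.1 (hG.2.2.2.eventually (eventually_ge_nhds hτ1))).imp fun b hb => hb b le_rfl
  have right_of_ω : ∀ y, ω < y → τ ≤ G y := fun y hy => by
    obtain ⟨s, hs, hsy⟩ := (csInf_lt_iff (hG.bddBelow_setOf_le hτ0) hne).1 (h.trans_lt hy)
    exact hs.trans (hG.1 hsy.le)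
  have hright : Tendsto G (𝓝[>] ω) (𝓝 (G ω)) :=
    (hG.2.1 ω).mono_left (nhdsWithin_mono ω Ioi_subset_Ici_self)
  exact ge_of_tendsto hright (eventually_mem_nhdsWithin.mono right_of_ω)

lemma apply_le_of_lt_quantilePlus (hG : IsCDF G) {τ ω : ℝ} (hτ : 0 < τ)
    (h : ω < quantilePlus G τ) : G ω ≤ τ := by
  by_contra! hlt
  have hbdd : BddBelow {x | τ < G x} :=
    (hG.bddBelow_setOf_le hτ).mono fun _ (hx : τ < G _) => hx.le
  exact (csInf_le hbdd hlt).not_gt h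

end IsCDF

section SupportedOnIcc

variable {ρ : Measure ℝ} [IsProbabilityMeasure ρ] {a b : ℝ}

lemma measure_Iic_eq_zero_of_lt (hρ : ρ (Icc a b) = 1) {ω : ℝ} (hω : ω < a) :
    ρ (Iic ω) = 0 :=
  measure_mono_null
    (fun _ ht hmem => (ht.trans_lt hω).not_ge (mem_Icc.1 hmem).1 : Iic ω ⊆ (Icc a b)ᶜ)
    ((prob_compl_eq_zero_iff measurableSet_Icc).2 hρ)

lemma measure_Iic_eq_one_of_le (hρ : ρ (Icc a b) = 1) {ω : ℝ} (hω : b ≤ ω) :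
    ρ (Iic ω) = 1 :=
  le_antisymm prob_le_one (hρ.symm.le.trans (measure_mono fun _ ht => ht.2.trans hω))

end SupportedOnIcc

section QuantileSelection

variable {G : ℝ → ℝ} {τ : ℝ} {ρ : Measure ℝ} [IsProbabilityMeasure ρ]

lemma toReal_measure_Iic_le_div (hG : IsCDF G) (hτ0 : 0 < τ) (hτ1 : τ < 1)
    (hρ : ρ (Icc (quantile G τ) (quantilePlus G τ)) = 1) (ω : ℝ) :
    (ρ (Iic ω)).toReal ≤ G ω / τ := by
  rcases le_or_gt (quantile G τ) ω with h | h
  · calc (ρ (Iic ω)).toReal ≤ 1 := measureReal_le_one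
      _ ≤ G ω / τ := (one_le_div hτ0).2 (hG.le_apply_of_quantile_le hτ0 hτ1 h)
  · rw [measure_Iic_eq_zero_of_lt hρ h, ENNReal.toReal_zero]
    exact div_nonneg (hG.nonneg ω) hτ0.le

lemma div_le_toReal_measure_Iic (hG : IsCDF G) (hτ0 : 0 < τ) (hτ1 : τ < 1)
    (hρ : ρ (Icc (quantile G τ) (quantilePlus G τ)) = 1) (ω : ℝ) :
    (G ω - τ) / (1 - τ) ≤ (ρ (Iic ω)).toReal := by
  rcases le_or_gt (quantilePlus G τ) ω with h | h
  · rw [measure_Iic_eq_one_of_le hρ h, ENNReal.toReal_one, div_le_one (by linarith)]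
    linarith [hG.le_one ω]
  · exact (div_nonpos_of_nonpos_of_nonneg (by linarith [hG.apply_le_of_lt_quantilePlus hτ0 h])
      (by linarith)).trans ENNReal.toReal_nonneg

end QuantileSelection

theorem stmt11_general {X : Type*} [MeasurableSpace X] (μ : Measure X)
    [IsProbabilityMeasure μ]
    (F : ℝ → ℝ) (τ : ℝ) (hτ : τ ∈ Set.Ioo (0:ℝ) 1)
    (G : X → ℝ → ℝ) (hG : ∀ x, IsCDF (G x))
    (hmeas : ∀ ω : ℝ, Measurable fun x => G x ω)
    (hbar : ∀ ω : ℝ, ∫ x, G x ω ∂μ = F ω)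
    (r : X → Measure ℝ) (hr : ∀ x, IsProbabilityMeasure (r x))
    (hsupp : ∀ x, r x (Set.Icc (quantile (G x) τ) (quantilePlus (G x) τ)) = 1)
    (hrmeas : ∀ ω : ℝ, Measurable fun x => ((r x) (Set.Iic ω)).toReal)
    (H : ℝ → ℝ) (hH : ∀ ω : ℝ, H ω = ∫ x, ((r x) (Set.Iic ω)).toReal ∂μ) :
    ∀ ω : ℝ, FR F τ ω ≤ H ω ∧ H ω ≤ FL F τ ω := by
  obtain ⟨hτ0, hτ1⟩ := hτ
  intro ω
  have hr_int : Integrable (fun x => ((r x) (Iic ω)).toReal) μ :=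
    .of_bound (hrmeas ω).aestronglyMeasurable 1 (.of_forall fun x => by
      rw [Real.norm_of_nonneg ENNReal.toReal_nonneg]; exact measureReal_le_one)
  have hG_int : Integrable (fun x => G x ω) μ :=
    .of_bound (hmeas ω).aestronglyMeasurable 1 (.of_forall fun x => by
      rw [Real.norm_of_nonneg ((hG x).nonneg ω)]; exact (hG x).le_one ω)
  rw [FR, FL, hH]
  refine ⟨max_le ?_ (integral_nonneg fun _ => ENNReal.toReal_nonneg), le_min ?_ ?_⟩
  · calc (F ω - τ) / (1 - τ) = ∫ x, (G x ω - τ) / (1 - τ) ∂μ := by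
          rw [integral_div, integral_sub hG_int (integrable_const τ), hbar, integral_const,
            probReal_univ, one_smul]
      _ ≤ _ := integral_mono ((hG_int.sub (integrable_const τ)).div_const _) hr_int
          fun x => div_le_toReal_measure_Iic (hG x) hτ0 hτ1 (hsupp x) ω
  · calc _ ≤ ∫ x, G x ω / τ ∂μ := integral_mono hr_int (hG_int.div_const _)
          fun x => toReal_measure_Iic_le_div (hG x) hτ0 hτ1 (hsupp x) ω
      _ = F ω / τ := by rw [integral_div, hbar]
  · calc _ ≤ ∫ _, (1 : ℝ) ∂μ := integral_mono hr_int (integrable_const 1)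
          fun _ => measureReal_le_one
      _ = 1 := by simp

/-- the distribution of posterior τ-quantiles induced by any signal and
selection rule is sandwiched between the truncations F_R^τ and F_L^τ. -/
theorem stmt11 {X : Type*} [MeasurableSpace X] (μ : Measure X)
    [IsProbabilityMeasure μ]
    (F : ℝ → ℝ) (hF : IsCDF F) (τ : ℝ) (hτ : τ ∈ Set.Ioo (0:ℝ) 1)
    (G : X → ℝ → ℝ) (hG : ∀ x, IsCDF (G x))
    (hmeas : ∀ ω : ℝ, Measurable fun x => G x ω)
    (hbar : ∀ ω : ℝ, ∫ x, G x ω ∂μ = F ω)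
    (r : X → Measure ℝ) (hr : ∀ x, IsProbabilityMeasure (r x))
    (hsupp : ∀ x, r x (Set.Icc (quantile (G x) τ) (quantilePlus (G x) τ)) = 1)
    (hrmeas : ∀ ω : ℝ, Measurable fun x => ((r x) (Set.Iic ω)).toReal)
    (H : ℝ → ℝ) (hH : ∀ ω : ℝ, H ω = ∫ x, ((r x) (Set.Iic ω)).toReal ∂μ) :
    ∀ ω : ℝ, FR F τ ω ≤ H ω ∧ H ω ≤ FL F τ ω :=
  stmt11_general μ F τ hτ G hG hmeas hbar r hr hsupp hrmeas H hH
end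

section
/- Let H : [0,1] → ℝ be nondecreasing, right-continuous, with 0 ≤ H(x) ≤ x for all x. Suppose there exists an interval [a,b) ⊆ [0,1] with a < b and a value c with 0 < H(x) and H(x) < x for all x ∈ [a,b), such that H restricted to [a,b) is not a step function with at most one jump. Then H is not an extreme point of the convex set {H nondecreasing, right-continuous, 0 ≤ H(x) ≤ x}: there exist distinct H₁ ≠ H₂ in this set and λ ∈ (0,1) with H = λH₁ + (1−λ)H₂, where H₁ and H₂ agree with H outside a subinterval of [a,b). -/
open Set Filter Function MeasureTheory

/-!
A monotone, right-continuous `H` that is not a one-jump step function on `[a, b)` takes three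
increasing values `H p < H q < H r` there. Composing `H` with `y ↦ y ± ε · tent (H p) (H r) y`
gives two functions that are still monotone (the tent is `1`-Lipschitz and `ε ≤ 1`) and
right-continuous, agree with `H` outside `[p, r]`, differ at `q`, and average to `H`. They stay
between `0` and the diagonal because `x - H x` is lower semicontinuous, hence bounded below by
some `δ > 0` on the compact interval `[p, r]`, and `ε (H r - H p) ≤ δ`.
-/

def IsOneJumpStepOn {α β : Type*} [Preorder α] (f : α → β) (a b : α) : Prop :=
  ∃ t ∈ Icc a b, (∀ x ∈ Ico a t, ∀ y ∈ Ico a t, f x = f y) ∧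
    (∀ x ∈ Ico t b, ∀ y ∈ Ico t b, f x = f y)

theorem Monotone.upperSemicontinuous_of_continuousWithinAt_Ici {α β : Type*} [LinearOrder α]
    [TopologicalSpace α] [LinearOrder β] [TopologicalSpace β] [OrderTopology β] {f : α → β}
    (hf : Monotone f) (hrc : ∀ x, ContinuousWithinAt f (Ici x) x) : UpperSemicontinuous f := by
  intro x y hy
  rw [← nhdsLE_sup_nhdsGE, eventually_sup]
  exact ⟨eventually_nhdsWithin_of_forall fun z hz => (hf hz).trans_lt hy,
    hrc x (Iio_mem_nhds hy)⟩

theorem Monotone.exists_lt_lt_of_not_isOneJumpStepOn {α β : Type*}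
    [ConditionallyCompleteLinearOrder α] [TopologicalSpace α] [OrderTopology α]
    [LinearOrder β] [TopologicalSpace β] [T1Space β] {f : α → β}
    (hf : Monotone f) (hrc : ∀ x, ContinuousWithinAt f (Ici x) x) {a b : α} (hab : a ≤ b)
    (hstep : ¬ IsOneJumpStepOn f a b) :
    ∃ p ∈ Ico a b, ∃ q ∈ Ico a b, ∃ r ∈ Ico a b, f p < f q ∧ f q < f r := by
  by_contra hno
  refine hstep ?_
  set s := {x ∈ Ico a b | f a < f x}
  have hbase : ∀ x ∈ Ico a b, x ∉ s → f x = f a := fun x hx hxs =>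
    le_antisymm (not_lt.1 fun hlt => hxs ⟨hx, hlt⟩) (hf hx.1)
  rcases s.eq_empty_or_nonempty with hs | ⟨v, hv⟩
  · refine ⟨b, ⟨hab, le_rfl⟩, fun x hx y hy => ?_, fun x hx => absurd hx.2 hx.1.not_gt⟩
    rw [hbase x hx (hs ▸ notMem_empty x), hbase y hy (hs ▸ notMem_empty y)]
  have hconst : ∀ x ∈ s, f x = f v := fun x hx => by
    have ha : a ∈ Ico a b := ⟨le_rfl, hx.1.1.trans_lt hx.1.2⟩
    rcases lt_trichotomy (f x) (f v) with hlt | heq | hlt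
    · exact absurd ⟨a, ha, x, hx.1, v, hv.1, hx.2, hlt⟩ hno
    · exact heq
    · exact absurd ⟨a, ha, v, hv.1, x, hx.1, hv.2, hlt⟩ hno
  have hbdd : BddBelow s := ⟨a, fun x hx => hx.1.1⟩
  set t := sInf s
  have hglb : IsGLB s t := isGLB_csInf ⟨v, hv⟩ hbdd
  have hat : a ≤ t := le_csInf ⟨v, hv⟩ fun x hx => hx.1.1
  have htv : t ≤ v := csInf_le hbdd hv
  refine ⟨t, ⟨hat, htv.trans hv.1.2.le⟩, fun x hx y hy => ?_, fun x hx y hy => ?_⟩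
  · have hlow : ∀ z ∈ Ico a t, f z = f a := fun z hz =>
      hbase z ⟨hz.1, hz.2.trans_le (htv.trans hv.1.2.le)⟩ fun hzs =>
        hz.2.not_ge (csInf_le hbdd hzs)
    rw [hlow x hx, hlow y hy]
  · have hup : ∀ z ∈ Ico t b, f z = f v := by
      intro z hz
      rcases hz.1.eq_or_lt with rfl | htz
      -- `t = inf s` is in the closure of `s`, where `f = f v`; right-continuity carries this to `t`
      · have hcl : f t ∈ closure (f '' s) :=
          ((hrc t).mono fun y hy => hglb.1 hy).mem_closure_image (hglb.mem_closure ⟨v, hv⟩)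
        have : f '' s ⊆ {f v} := image_subset_iff.2 hconst
        simpa using closure_mono this hcl
      · obtain ⟨y, hys, hyz⟩ := exists_lt_of_csInf_lt ⟨v, hv⟩ htz
        exact hconst z ⟨⟨hat.trans hz.1, hz.2⟩, hys.2.trans_le (hf hyz.le)⟩
    rw [hup x hx, hup y hy]

theorem IsCompact.exists_pos_forall_le {α : Type*} [TopologicalSpace α] {K : Set α}
    (hK : IsCompact K) {g : α → ℝ} (hg : LowerSemicontinuousOn g K) (hpos : ∀ x ∈ K, 0 < g x) :
    ∃ δ > 0, ∀ x ∈ K, δ ≤ g x := by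
  rcases K.eq_empty_or_nonempty with rfl | hne
  · exact ⟨1, one_pos, by simp⟩
  obtain ⟨x₀, hx₀, hmin⟩ := hg.exists_isMinOn hne hK
  exact ⟨g x₀, hpos x₀ hx₀, hmin⟩

theorem Monotone.exists_pos_le_sub_of_lt {α : Type*} [LinearOrder α] [TopologicalSpace α]
    [OrderTopology α] [CompactIccSpace α] {f u : α → ℝ} (hf : Monotone f)
    (hrc : ∀ x, ContinuousWithinAt f (Ici x) x) (hu : Continuous u) {p r : α}
    (hlt : ∀ x ∈ Icc p r, f x < u x) : ∃ δ > 0, ∀ x ∈ Icc p r, δ ≤ u x - f x := by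
  have hneg : LowerSemicontinuous fun x => -f x :=
    continuous_neg.comp_upperSemicontinuous_antitone
      (hf.upperSemicontinuous_of_continuousWithinAt_Ici hrc) fun _ _ => neg_le_neg
  have hlsc : LowerSemicontinuous fun x => u x - f x := by
    simpa only [sub_eq_add_neg] using hu.lowerSemicontinuous.add hneg
  exact isCompact_Icc.exists_pos_forall_le (hlsc.lowerSemicontinuousOn _)
    fun x hx => sub_pos.2 (hlt x hx)

def tent (a b x : ℝ) : ℝ := max 0 (min (x - a) (b - x))

theorem tent_nonneg (a b x : ℝ) : 0 ≤ tent a b x := le_max_left _ _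

theorem tent_pos {a b x : ℝ} (hx : x ∈ Ioo a b) : 0 < tent a b x :=
  lt_max_of_lt_right (lt_min (sub_pos.2 hx.1) (sub_pos.2 hx.2))

theorem tent_eq_zero {a b x : ℝ} (hx : x ∉ Ioo a b) : tent a b x = 0 := by
  refine max_eq_left ?_
  rcases not_and_or.1 hx with h | h
  · exact (min_le_left _ _).trans (sub_nonpos.2 (not_lt.1 h))
  · exact (min_le_right _ _).trans (sub_nonpos.2 (not_lt.1 h))

theorem tent_le_sub_left {a b x : ℝ} (h : a ≤ x) : tent a b x ≤ x - a :=
  max_le (sub_nonneg.2 h) (min_le_left _ _)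

theorem lipschitzWith_tent (a b : ℝ) : LipschitzWith 1 (tent a b) := by
  have h := ((LipschitzWith.id.sub (.const a)).min ((LipschitzWith.const b).sub .id)).const_max 0
  simp only [add_zero, zero_add, max_self] at h
  exact h

theorem monotone_add_mul_of_lipschitzWith_one_s18 {g : ℝ → ℝ} (hg : LipschitzWith 1 g) {c : ℝ}
    (hc : |c| ≤ 1) : Monotone fun y => y + c * g y := by
  intro u v huv
  have hgd : |g u - g v| ≤ v - u := by
    simpa [Real.dist_eq, abs_of_nonpos (sub_nonpos.2 huv)] using hg.dist_le_mul u v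
  have : c * (g u - g v) ≤ v - u :=
    calc c * (g u - g v) ≤ |c| * |g u - g v| := by rw [← abs_mul]; exact le_abs_self _
      _ ≤ 1 * (v - u) := mul_le_mul hc hgd (abs_nonneg _) zero_le_one
      _ = v - u := one_mul _
  show u + c * g u ≤ v + c * g v
  linarith

/-- `MFI 0 id`, for functions on `[0, 1]`. -/
def unitMFI : Set (Icc (0:ℝ) 1 → ℝ) :=
  {H | Monotone H ∧ (∀ x, ContinuousWithinAt H (Ici x) x) ∧ ∀ x, 0 ≤ H x ∧ H x ≤ (x : ℝ)}

theorem add_mul_tent_mem_unitMFI {H : Icc (0:ℝ) 1 → ℝ} (hH : H ∈ unitMFI) {p r : Icc (0:ℝ) 1}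
    {δ c : ℝ} (hgap : ∀ x ∈ Icc p r, δ ≤ (x : ℝ) - H x) (hc : |c| ≤ 1)
    (hcδ : |c| * (H r - H p) ≤ δ) :
    (fun x => H x + c * tent (H p) (H r) (H x)) ∈ unitMFI := by
  obtain ⟨hmono, hrc, hbd⟩ := hH
  have hlip := lipschitzWith_tent (H p) (H r)
  refine ⟨(monotone_add_mul_of_lipschitzWith_one_s18 hlip hc).comp hmono, fun x => ?_, fun x => ?_⟩
  · exact (continuous_id.add (continuous_const.mul hlip.continuous)).continuousAt
      |>.comp_continuousWithinAt (hrc x)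
  by_cases hx : H x ∈ Ioo (H p) (H r)
  · have hpert : |c * tent (H p) (H r) (H x)| ≤ min (H x - H p) δ := by
      rw [abs_mul, abs_of_nonneg (tent_nonneg _ _ _)]
      have htent := tent_le_sub_left (b := H r) hx.1.le
      refine le_min ?_ ?_
      · exact (mul_le_of_le_one_left (tent_nonneg _ _ _) hc).trans htent
      · calc |c| * tent (H p) (H r) (H x) ≤ |c| * (H r - H p) := by gcongr; linarith [hx.2]
          _ ≤ δ := hcδ
    have hgapx := hgap x ⟨(hmono.reflect_lt hx.1).le, (hmono.reflect_lt hx.2).le⟩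
    have hbelow := abs_le.1 (hpert.trans (min_le_left _ _))
    have habove := abs_le.1 (hpert.trans (min_le_right _ _))
    constructor <;> linarith [(hbd p).1]
  · simpa only [tent_eq_zero hx, mul_zero, add_zero] using hbd x

/-- rectangle-perturbation argument: a strictly interior piece that is
not a one-jump step function destroys extremality. -/
theorem stmt18
    (S : Set (Set.Icc (0:ℝ) 1 → ℝ))
    (hS : S = {H : Set.Icc (0:ℝ) 1 → ℝ | Monotone H ∧
      (∀ x, ContinuousWithinAt H (Set.Ici x) x) ∧ ∀ x, 0 ≤ H x ∧ H x ≤ (x : ℝ)})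
    (H : Set.Icc (0:ℝ) 1 → ℝ) (hH : H ∈ S)
    (a b : Set.Icc (0:ℝ) 1) (hab : a < b)
    (hint : ∀ x ∈ Set.Ico a b, 0 < H x ∧ H x < (x : ℝ))
    (hnotstep : ¬ ∃ t ∈ Set.Icc a b,
      (∀ x ∈ Set.Ico a t, ∀ y ∈ Set.Ico a t, H x = H y) ∧
      (∀ x ∈ Set.Ico t b, ∀ y ∈ Set.Ico t b, H x = H y)) :
    ∃ H₁ ∈ S, ∃ H₂ ∈ S, H₁ ≠ H₂ ∧ ∃ l ∈ Set.Ioo (0:ℝ) 1,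
      (∀ x, H x = l * H₁ x + (1 - l) * H₂ x) ∧
      ∃ c d : Set.Icc (0:ℝ) 1, Set.Icc c d ⊆ Set.Ico a b ∧
        ∀ x, x ∉ Set.Icc c d → H₁ x = H x ∧ H₂ x = H x := by
  subst hS
  obtain ⟨hmono, hrc, -⟩ := id hH
  obtain ⟨p, hp, q, -, r, hr, hpq, hqr⟩ :=
    hmono.exists_lt_lt_of_not_isOneJumpStepOn hrc hab.le hnotstep
  have hsub : Icc p r ⊆ Ico a b := fun x hx => ⟨hp.1.trans hx.1, hx.2.trans_lt hr.2⟩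
  obtain ⟨δ, hδ, hgap⟩ := hmono.exists_pos_le_sub_of_lt hrc continuous_subtype_val
    fun x hx => (hint x (hsub hx)).2
  set ε := min 1 (δ / (H r - H p))
  have hspread : 0 < H r - H p := sub_pos.2 (hpq.trans hqr)
  have hε : 0 < ε := lt_min one_pos (div_pos hδ hspread)
  have hε1 : |ε| ≤ 1 := (abs_of_pos hε).trans_le (min_le_left _ _)
  have hεδ : |ε| * (H r - H p) ≤ δ := by
    rw [abs_of_pos hε, ← le_div_iff₀ hspread]; exact min_le_right _ _
  have htq : 0 < tent (H p) (H r) (H q) := tent_pos ⟨hpq, hqr⟩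
  refine ⟨_, add_mul_tent_mem_unitMFI hH hgap hε1 hεδ,
    _, add_mul_tent_mem_unitMFI hH hgap (by rwa [abs_neg]) (by rwa [abs_neg]),
    fun h => by nlinarith [congrFun h q], 1 / 2, by norm_num, fun x => by ring,
    p, r, hsub, fun x hx => ?_⟩
  have hout : H x ∉ Ioo (H p) (H r) := fun h =>
    hx ⟨(hmono.reflect_lt h.1).le, (hmono.reflect_lt h.2).le⟩
  simp [tent_eq_zero hout]
end
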